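/- Let (R,m) be a one-dimensional Cohen–Macaulay local ring. Let I be a regular trace ideal with a principal reduction (x), and let J be a trace ideal with I ⊆ J ⊆ integral closure of I. If J is stable (i.e., xJ = J² for every principal reduction, equivalently J ≅ J²), then I = J. -/
import Mathlib


open nonZeroDivisors IsLocalRing

/-- The trace ideal of an `R`-module `M`. -/
noncomputable def traceIdeal (R : Type*) [CommRing R] (M : Type*) [AddCommGroup M]
    [Module R M] : Ideal R :=
  ⨆ f : M →ₗ[R] R, LinearMap.range f

/-- `x` is integral over the ideal `I`. -/
def IsIntegralOverIdeal {R : Type*} [CommRing R] (I : Ideal R) (x : R) : Prop :=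
  ∃ (n : ℕ) (a : ℕ → R), 1 ≤ n ∧ (∀ j, 1 ≤ j → j ≤ n → a j ∈ I ^ j) ∧
    x ^ n + ∑ j ∈ Finset.Icc 1 n, a j * x ^ (n - j) = 0

/-- Let `(R,m)` be a one-dimensional Cohen–Macaulay local ring, `I` a regular
trace ideal with a principal reduction `(x)`, and `J` a trace ideal with
`I ⊆ J ⊆ Ī`.  If `J` is stable then `I = J`. -/
theorem trace_between_stable_closure (R : Type*) [CommRing R] [IsLocalRing R]
    [IsNoetherianRing R]
    (hdim : ringKrullDim R = 1)
    (hCM : ∃ r ∈ maximalIdeal R, r ∈ R⁰)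
    (I : Ideal R) (htraceI : traceIdeal R I = I)
    (x : R) (hxI : x ∈ I) (hx : x ∈ R⁰)
    (hred : ∃ n : ℕ, Ideal.span {x} * I ^ n = I ^ (n + 1))
    (J : Ideal R) (htraceJ : traceIdeal R J = J)
    (hIJ : I ≤ J) (hJbar : ∀ y ∈ J, IsIntegralOverIdeal I y)
    (hstable : ∃ y ∈ J, y ∈ R⁰ ∧ J ^ 2 = Ideal.span {y} * J) :
    I = J := by
  obtain ⟨n, hn⟩ := hred
  obtain ⟨y, hyJ, hy, hJ2⟩ := hstable
  have hxJ : x ∈ J := hIJ hxI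
  -- L1 : (xʲ) · Iⁿ = I^(n+j)
  have L1 : ∀ j : ℕ, Ideal.span {x ^ j} * I ^ n = I ^ (n + j) := by
    intro j
    induction j with
    | zero => simp [Ideal.span_singleton_one]
    | succ j ih =>
      have h1 : Ideal.span {x ^ (j + 1)} * I ^ n
          = Ideal.span {x ^ j} * (Ideal.span {x} * I ^ n) := by
        rw [pow_succ, ← Ideal.span_singleton_mul_span_singleton]
        ring
      rw [h1, hn]
      calc Ideal.span {x ^ j} * I ^ (n + 1)
          = (Ideal.span {x ^ j} * I ^ n) * I := by rw [pow_succ]; ring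
        _ = I ^ (n + j) * I := by rw [ih]
        _ = I ^ (n + (j + 1)) := by rw [← pow_succ, Nat.add_assoc]
  -- L2 : (yᵐ) · J = J^(m+1)
  have L2 : ∀ m : ℕ, Ideal.span {y ^ m} * J = J ^ (m + 1) := by
    intro m
    induction m with
    | zero => simp [Ideal.span_singleton_one]
    | succ m ih =>
      have h1 : Ideal.span {y ^ (m + 1)} * J
          = Ideal.span {y ^ m} * (Ideal.span {y} * J) := by
        rw [pow_succ, ← Ideal.span_singleton_mul_span_singleton]
        ring
      rw [h1, ← hJ2]
      calc Ideal.span {y ^ m} * J ^ 2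
          = (Ideal.span {y ^ m} * J) * J := by rw [sq]; ring
        _ = J ^ (m + 1) * J := by rw [ih]
        _ = J ^ (m + 2) := by rw [← pow_succ]
  -- integral equation for y over I
  obtain ⟨k, a, hk1, ha, heq⟩ := hJbar y hyJ
  -- step1
  have step1 : ∀ j : ℕ, 1 ≤ j → j ≤ k →
      Ideal.span {x ^ (j - 1) * y ^ (k - j)} * J ≤ Ideal.span {y ^ (k - 1)} * J := by
    intro j h1 h2
    have hxj : Ideal.span {x ^ (j - 1)} ≤ J ^ (j - 1) := by
      rw [Ideal.span_singleton_le_iff_mem]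
      exact Ideal.pow_mem_pow hxJ _
    calc Ideal.span {x ^ (j - 1) * y ^ (k - j)} * J
        = Ideal.span {x ^ (j - 1)} * (Ideal.span {y ^ (k - j)} * J) := by
          rw [← Ideal.span_singleton_mul_span_singleton]; ring
      _ ≤ J ^ (j - 1) * (Ideal.span {y ^ (k - j)} * J) :=
          Ideal.mul_mono_left hxj
      _ = Ideal.span {y ^ (k - j)} * (J ^ (j - 1) * J) := by ring
      _ = Ideal.span {y ^ (k - j)} * J ^ ((j - 1) + 1) := by rw [pow_succ]
      _ = Ideal.span {y ^ (k - j)} * (Ideal.span {y ^ (j - 1)} * J) := by rw [L2 (j - 1)]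
      _ = Ideal.span {y ^ (k - j) * y ^ (j - 1)} * J := by
          rw [← Ideal.span_singleton_mul_span_singleton]; ring
      _ = Ideal.span {y ^ (k - 1)} * J := by
          rw [← pow_add]
          have : k - j + (j - 1) = k - 1 := by omega
          rw [this]
  -- step2
  have step2 : ∀ j : ℕ, 1 ≤ j → j ≤ k →
      Ideal.span {a j * y ^ (k - j)} * (I ^ n * J)
        ≤ Ideal.span {x * y ^ (k - 1)} * (I ^ n * J) := by
    intro j h1 h2
    have haj : Ideal.span {a j} ≤ I ^ j := by
      rw [Ideal.span_singleton_le_iff_mem]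
      exact ha j h1 h2
    calc Ideal.span {a j * y ^ (k - j)} * (I ^ n * J)
        = Ideal.span {a j} * (Ideal.span {y ^ (k - j)} * (I ^ n * J)) := by
          rw [← Ideal.span_singleton_mul_span_singleton]; ring
      _ ≤ I ^ j * (Ideal.span {y ^ (k - j)} * (I ^ n * J)) := Ideal.mul_mono_left haj
      _ = Ideal.span {y ^ (k - j)} * ((I ^ n * I ^ j) * J) := by ring
      _ = Ideal.span {y ^ (k - j)} * (I ^ (n + j) * J) := by rw [← pow_add]
      _ = Ideal.span {y ^ (k - j)} * ((Ideal.span {x ^ j} * I ^ n) * J) := by rw [L1 j]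
      _ = Ideal.span {y ^ (k - j)} * Ideal.span {x ^ j} * (I ^ n * J) := by ring
      _ = Ideal.span {y ^ (k - j) * x ^ j} * (I ^ n * J) := by
          rw [← Ideal.span_singleton_mul_span_singleton]
      _ = Ideal.span {x * (x ^ (j - 1) * y ^ (k - j))} * (I ^ n * J) := by
          have : y ^ (k - j) * x ^ j = x * (x ^ (j - 1) * y ^ (k - j)) := by
            have hj : j - 1 + 1 = j := by omega
            calc y ^ (k - j) * x ^ j = y ^ (k - j) * x ^ (j - 1 + 1) := by rw [hj]
              _ = x * (x ^ (j - 1) * y ^ (k - j)) := by ring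
          rw [this]
      _ = Ideal.span {x} * ((Ideal.span {x ^ (j - 1) * y ^ (k - j)} * J) * I ^ n) := by
          rw [← Ideal.span_singleton_mul_span_singleton]; ring
      _ ≤ Ideal.span {x} * ((Ideal.span {y ^ (k - 1)} * J) * I ^ n) :=
          Ideal.mul_mono_right (Ideal.mul_mono_left (step1 j h1 h2))
      _ = Ideal.span {x * y ^ (k - 1)} * (I ^ n * J) := by
          rw [← Ideal.span_singleton_mul_span_singleton]; ring
  -- key : multiplication by y^k maps I^n*J into (x·y^(k-1))·(I^n·J)
  have key : ∀ w ∈ I ^ n * J,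
      y ^ k * w ∈ Ideal.span {x * y ^ (k - 1)} * (I ^ n * J) := by
    intro w hw
    have hyk : y ^ k = -∑ j ∈ Finset.Icc 1 k, a j * y ^ (k - j) :=
      eq_neg_of_add_eq_zero_left heq
    rw [hyk, neg_mul, Finset.sum_mul]
    refine neg_mem (Ideal.sum_mem _ ?_)
    intro j hj
    obtain ⟨hj1, hj2⟩ := Finset.mem_Icc.mp hj
    exact step2 j hj1 hj2 (Ideal.mul_mem_mul (Ideal.mem_span_singleton_self _) hw)
  -- step5 : y·w ∈ x·(I^n·J) for w ∈ I^n·J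
  have step5 : ∀ w ∈ I ^ n * J, ∃ w' ∈ I ^ n * J, y * w = x * w' := by
    intro w hw
    obtain ⟨w', hw', hww⟩ := Ideal.mem_span_singleton_mul.mp (key w hw)
    refine ⟨w', hw', ?_⟩
    have hpow : y ^ (k - 1) * y = y ^ k := by
      rw [← pow_succ]
      congr 1
      omega
    have hcalc : y ^ (k - 1) * (y * w) = y ^ (k - 1) * (x * w') := by
      calc y ^ (k - 1) * (y * w) = (y ^ (k - 1) * y) * w := by ring
        _ = y ^ k * w := by rw [hpow]
        _ = x * y ^ (k - 1) * w' := hww.symm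
        _ = y ^ (k - 1) * (x * w') := by ring
    exact (mul_cancel_left_mem_nonZeroDivisors (pow_mem hy _)).mp hcalc
  -- step6 : iterate
  have step6 : ∀ m : ℕ, ∀ w ∈ I ^ n * J, ∃ w' ∈ I ^ n * J, y ^ m * w = x ^ m * w' := by
    intro m
    induction m with
    | zero => intro w hw; exact ⟨w, hw, by simp⟩
    | succ m ih =>
      intro w hw
      obtain ⟨w1, hw1, h1⟩ := step5 w hw
      obtain ⟨w2, hw2, h2⟩ := ih w1 hw1
      refine ⟨w2, hw2, ?_⟩
      calc y ^ (m + 1) * w = y ^ m * (y * w) := by ring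
        _ = y ^ m * (x * w1) := by rw [h1]
        _ = x * (y ^ m * w1) := by ring
        _ = x * (x ^ m * w2) := by rw [h2]
        _ = x ^ (m + 1) * w2 := by ring
  -- step7 : y·J ⊆ x·J
  have step7 : ∀ b ∈ J, ∃ c ∈ J, y * b = x * c := by
    intro b hb
    have hw : x ^ n * b ∈ I ^ n * J := Ideal.mul_mem_mul (Ideal.pow_mem_pow hxI n) hb
    obtain ⟨w', hw', h⟩ := step6 (n + 1) _ hw
    have hle : I ^ n * J ≤ Ideal.span {y ^ n} * J := by
      rw [L2 n]
      calc I ^ n * J ≤ J ^ n * J := Ideal.mul_mono_left (Ideal.pow_right_mono hIJ n)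
        _ = J ^ (n + 1) := (pow_succ J n).symm
    obtain ⟨c, hc, hyc⟩ := Ideal.mem_span_singleton_mul.mp (hle hw')
    refine ⟨c, hc, ?_⟩
    have hcalc : (x ^ n * y ^ n) * (y * b) = (x ^ n * y ^ n) * (x * c) := by
      calc (x ^ n * y ^ n) * (y * b) = y ^ (n + 1) * (x ^ n * b) := by ring
        _ = x ^ (n + 1) * w' := h
        _ = x ^ (n + 1) * (y ^ n * c) := by rw [hyc]
        _ = (x ^ n * y ^ n) * (x * c) := by ring
    exact (mul_cancel_left_mem_nonZeroDivisors
      (mul_mem (pow_mem hx n) (pow_mem hy n))).mp hcalc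
  -- final step
  refine le_antisymm hIJ ?_
  intro q hq
  have hmain : ∀ b : R, b ∈ I → ∃ c : R, q * b = x * c := by
    intro b hb
    have hqb : q * b ∈ J ^ 2 := by
      rw [sq]
      exact Ideal.mul_mem_mul hq (hIJ hb)
    rw [hJ2] at hqb
    obtain ⟨d, hd, hyd⟩ := Ideal.mem_span_singleton_mul.mp hqb
    obtain ⟨c, _, hxc⟩ := step7 d hd
    exact ⟨c, by rw [← hyd, hxc]⟩
  have hchoice : ∀ b : I, q * (b : R) = x * (hmain b b.2).choose :=
    fun b => (hmain b b.2).choose_spec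
  let φ : I →ₗ[R] R :=
    { toFun := fun b => (hmain b b.2).choose
      map_add' := by
        intro b c
        apply (mul_cancel_left_mem_nonZeroDivisors hx).mp
        have h := hchoice (b + c)
        simp only [Submodule.coe_add] at h
        linear_combination hchoice b + hchoice c - h
      map_smul' := by
        intro r b
        apply (mul_cancel_left_mem_nonZeroDivisors hx).mp
        have h := hchoice (r • b)
        simp only [SetLike.val_smul, smul_eq_mul] at h
        simp only [RingHom.id_apply, smul_eq_mul]
        linear_combination r * hchoice b - h }
  have hqrange : q ∈ LinearMap.range φ := by
    refine ⟨⟨x, hxI⟩, ?_⟩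
    apply (mul_cancel_left_mem_nonZeroDivisors hx).mp
    calc x * φ ⟨x, hxI⟩ = q * x := (hchoice ⟨x, hxI⟩).symm
      _ = x * q := by ring
  have hle : LinearMap.range φ ≤ traceIdeal R I :=
    le_iSup (fun f : I →ₗ[R] R => LinearMap.range f) φ
  rw [htraceI] at hle
  exact hle hqrange
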